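/- arXiv:1202.0156 — 6 statements merged into one kernel-verified Lean document; each statement's English description precedes it below -/
import Mathlib

section
/- Let d > 0, let θ, φ ∈ ℝ and T > 0 satisfy T²·|sin(θ − φ)| < d, and let γ ∈ SL(2,ℝ) be any matrix whose first column equals (T cos φ, T sin φ). Set t := log(T/√d) and θ' := π/2 − θ. Then the first column (ā, c̄) of the matrix product g_t · r_{θ'} · γ satisfies ā² + c̄² < 2d. (This is the key computation in the proof of Proposition 2.2: it says the corresponding point of the upper half-plane, whose imaginary part is 1/(ā² + c̄²), lies above height 1/(2d).) -/
open Matrix Real MeasureTheory Filter Topology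

noncomputable section

/-- `SL(2,ℝ)` as the special linear group of 2×2 real matrices. -/
abbrev SL2 : Type := Matrix.SpecialLinearGroup (Fin 2) ℝ

/-- The topology on `SL(2,ℝ)` induced from the matrix entries. -/
instance : TopologicalSpace SL2 :=
  TopologicalSpace.induced (fun g : SL2 => (g : Matrix (Fin 2) (Fin 2) ℝ)) inferInstance

instance : MeasurableSpace SL2 := borel SL2

instance : BorelSpace SL2 := ⟨rfl⟩

/-- The diagonal geodesic-flow matrix `g_t = [[e^t, 0], [0, e^{-t}]]`. -/
def gSL (t : ℝ) : SL2 :=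
  ⟨!![Real.exp t, 0; 0, Real.exp (-t)], by
    simp [Matrix.det_fin_two_of, ← Real.exp_add]⟩

/-- The rotation matrix `r_θ = [[cos θ, -sin θ], [sin θ, cos θ]]`. -/
def rSL (θ : ℝ) : SL2 :=
  ⟨!![Real.cos θ, -Real.sin θ; Real.sin θ, Real.cos θ], by
    simp [Matrix.det_fin_two_of]
    nlinarith [Real.sin_sq_add_cos_sq θ]⟩

/-- The lower-triangular unipotent matrix `h_s⁻ = [[1, 0], [s, 1]]`. -/
def hSL (s : ℝ) : SL2 :=
  ⟨!![1, 0; s, 1], by simp [Matrix.det_fin_two_of]⟩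

/-- Squared Euclidean norm of the first column of a matrix in `SL(2,ℝ)`. -/
def colSq (γ : SL2) : ℝ :=
  ((γ : Matrix (Fin 2) (Fin 2) ℝ) 0 0) ^ 2 + ((γ : Matrix (Fin 2) (Fin 2) ℝ) 1 0) ^ 2

/-- Euclidean norm on `ℝ²`. -/
def eNorm (v : Fin 2 → ℝ) : ℝ := Real.sqrt (v 0 ^ 2 + v 1 ^ 2)

/-- Wedge product `u ∧ v = u₁v₂ − u₂v₁` on `ℝ²`. -/
def wedge (u v : Fin 2 → ℝ) : ℝ := u 0 * v 1 - u 1 * v 0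

/-- The unit vector `e_θ = (cos θ, sin θ)`. -/
def eVec (θ : ℝ) : Fin 2 → ℝ := ![Real.cos θ, Real.sin θ]

/-- `θ` is `d`-well-approximable by the orbit `Γx`: infinitely many `γ ∈ Γ` satisfy
`‖γx‖ · |e_θ ∧ γx| < d`. -/
def WellApprox (Γ : Subgroup SL2) (x : Fin 2 → ℝ) (d θ : ℝ) : Prop :=
  {γ : Γ | eNorm (((γ : SL2) : Matrix (Fin 2) (Fin 2) ℝ).mulVec x) *
      |wedge (eVec θ) (((γ : SL2) : Matrix (Fin 2) (Fin 2) ℝ).mulVec x)| < d}.Infinite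

/-- `Γ` is a non-uniform lattice in `SL(2,ℝ)`: a discrete subgroup admitting a Borel
fundamental domain of finite Haar measure, with non-compact quotient. -/
def IsNonuniformLattice (Γ : Subgroup SL2) : Prop :=
  DiscreteTopology Γ ∧
  (∃ μ : Measure SL2, μ.IsHaarMeasure ∧
    ∃ s : Set SL2, MeasurableSet s ∧ (∀ g : SL2, ∃! γ : Γ, g * (γ : SL2) ∈ s) ∧ μ s < ⊤) ∧
  ¬ IsCompact (Set.univ : Set (SL2 ⧸ Γ))

/-- the key computation in the proof of Proposition 2.2. -/
theorem stmt_0 (d θ φ T : ℝ) (hd : 0 < d) (hT : 0 < T)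
    (happrox : T ^ 2 * |Real.sin (θ - φ)| < d)
    (γ : SL2)
    (hγ0 : (γ : Matrix (Fin 2) (Fin 2) ℝ) 0 0 = T * Real.cos φ)
    (hγ1 : (γ : Matrix (Fin 2) (Fin 2) ℝ) 1 0 = T * Real.sin φ) :
    colSq (gSL (Real.log (T / Real.sqrt d)) * rSL (Real.pi / 2 - θ) * γ) < 2 * d := by
  have hsd : 0 < Real.sqrt d := Real.sqrt_pos.mpr hd
  have hTd : 0 < T / Real.sqrt d := div_pos hT hsd
  have hexp : Real.exp (Real.log (T / Real.sqrt d)) = T / Real.sqrt d := Real.exp_log hTd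
  have hexp' : Real.exp (-(Real.log (T / Real.sqrt d))) = Real.sqrt d / T := by
    rw [Real.exp_neg, hexp, inv_div]
  have hsq : Real.sqrt d ^ 2 = d := Real.sq_sqrt hd.le
  set t := Real.log (T / Real.sqrt d) with ht
  set ψ := Real.pi / 2 - θ with hψ
  have e00 : ((gSL t * rSL ψ * γ : SL2) : Matrix (Fin 2) (Fin 2) ℝ) 0 0 =
      Real.exp t * (Real.cos ψ * (γ : Matrix (Fin 2) (Fin 2) ℝ) 0 0
        - Real.sin ψ * (γ : Matrix (Fin 2) (Fin 2) ℝ) 1 0) := by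
    rw [Matrix.SpecialLinearGroup.coe_mul, Matrix.SpecialLinearGroup.coe_mul]
    simp [gSL, rSL, Matrix.mul_apply, Fin.sum_univ_two]; ring
  have e10 : ((gSL t * rSL ψ * γ : SL2) : Matrix (Fin 2) (Fin 2) ℝ) 1 0 =
      Real.exp (-t) * (Real.sin ψ * (γ : Matrix (Fin 2) (Fin 2) ℝ) 0 0
        + Real.cos ψ * (γ : Matrix (Fin 2) (Fin 2) ℝ) 1 0) := by
    rw [Matrix.SpecialLinearGroup.coe_mul, Matrix.SpecialLinearGroup.coe_mul]
    simp [gSL, rSL, Matrix.mul_apply, Fin.sum_univ_two]; ring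
  have key : colSq (gSL t * rSL ψ * γ) =
      (T / Real.sqrt d * (T * Real.sin (θ - φ))) ^ 2 +
      (Real.sqrt d / T * (T * Real.cos (θ - φ))) ^ 2 := by
    rw [colSq, e00, e10, hexp, hexp', hγ0, hγ1, hψ,
      Real.cos_pi_div_two_sub, Real.sin_pi_div_two_sub, Real.sin_sub, Real.cos_sub]
    ring
  rw [key]
  have habs : (T ^ 2 * |Real.sin (θ - φ)|) ^ 2 < d ^ 2 := by
    have h0 : 0 ≤ T ^ 2 * |Real.sin (θ - φ)| := by positivity
    nlinarith
  have hu : (T / Real.sqrt d) ^ 2 = T ^ 2 / d := by rw [div_pow, hsq]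
  have hv : (Real.sqrt d / T) ^ 2 = d / T ^ 2 := by rw [div_pow, hsq]
  have hT2 : (0:ℝ) < T ^ 2 := by positivity
  have h1 : (T / Real.sqrt d * (T * Real.sin (θ - φ))) ^ 2 < d := by
    rw [mul_pow, hu, div_mul_eq_mul_div, div_lt_iff₀ hd]
    have heq : T ^ 2 * (T * Real.sin (θ - φ)) ^ 2 = (T ^ 2 * |Real.sin (θ - φ)|) ^ 2 := by
      rw [mul_pow, mul_pow, sq_abs]; ring
    rw [heq]
    nlinarith [habs]
  have h2 : (Real.sqrt d / T * (T * Real.cos (θ - φ))) ^ 2 ≤ d := by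
    rw [mul_pow, hv]
    have heq : d / T ^ 2 * (T * Real.cos (θ - φ)) ^ 2 = d * Real.cos (θ - φ) ^ 2 := by
      field_simp
    rw [heq]
    exact mul_le_of_le_one_right hd.le (Real.cos_sq_le_one _)
  linarith [h1, h2]
end
end

section
/- Let d > 0 and θ ∈ ℝ, and set θ' := π/2 − θ. Suppose (γₙ) is a sequence in SL(2,ℝ) whose first columns vₙ ∈ ℝ² satisfy ‖vₙ‖ → ∞ and ‖vₙ‖ · |e_θ ∧ vₙ| < d for all n. Then, setting tₙ := log(‖vₙ‖/√d), one has tₙ → ∞, and for every n the first column of the matrix g_{tₙ} · r_{θ'} · γₙ has squared Euclidean norm strictly less than 2d. (Forward direction of Proposition 2.2: well-approximation of θ forces the geodesic trajectory {g_t r_{θ'} γ} to penetrate above height 1/(2d) in the upper half-plane at an unbounded sequence of times.) -/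
open Matrix Real MeasureTheory Filter Topology

noncomputable section

/-- forward direction of Proposition 2.2. -/
theorem stmt_1 (d θ : ℝ) (hd : 0 < d) (γ : ℕ → SL2) (v : ℕ → Fin 2 → ℝ)
    (hv : ∀ n i, v n i = (γ n : Matrix (Fin 2) (Fin 2) ℝ) i 0)
    (hnorm : Filter.Tendsto (fun n => eNorm (v n)) Filter.atTop Filter.atTop)
    (happrox : ∀ n, eNorm (v n) * |wedge (eVec θ) (v n)| < d) :
    Filter.Tendsto (fun n => Real.log (eNorm (v n) / Real.sqrt d))
      Filter.atTop Filter.atTop ∧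
    ∀ n, colSq (gSL (Real.log (eNorm (v n) / Real.sqrt d)) *
      rSL (Real.pi / 2 - θ) * γ n) < 2 * d := by
  constructor
  · exact Real.tendsto_log_atTop.comp (hnorm.atTop_div_const (Real.sqrt_pos.2 hd))
  · intro n
    have hd' : (0:ℝ) < Real.sqrt d := Real.sqrt_pos.2 hd
    set a := (γ n : Matrix (Fin 2) (Fin 2) ℝ) 0 0 with ha
    set b := (γ n : Matrix (Fin 2) (Fin 2) ℝ) 1 0 with hb
    have hr : eNorm (v n) = Real.sqrt (a ^ 2 + b ^ 2) := by
      rw [eNorm, hv n 0, hv n 1]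
    have hW : wedge (eVec θ) (v n) = Real.cos θ * b - Real.sin θ * a := by
      rw [wedge, eVec, hv n 0, hv n 1]; simp; rfl
    have happ := happrox n
    rw [hr, hW] at happ
    rw [hr]
    set r := Real.sqrt (a ^ 2 + b ^ 2) with hrdef
    have hcol : ∀ t : ℝ, colSq (gSL t * rSL (Real.pi / 2 - θ) * γ n) =
        (Real.exp t * (Real.sin θ * a - Real.cos θ * b)) ^ 2 +
        (Real.exp (-t) * (Real.cos θ * a + Real.sin θ * b)) ^ 2 := by
      intro t
      rw [colSq, Matrix.SpecialLinearGroup.coe_mul, Matrix.SpecialLinearGroup.coe_mul]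
      simp only [colSq, gSL, rSL, Matrix.SpecialLinearGroup.coe_mul, Matrix.mul_apply,
        Fin.sum_univ_two, Matrix.cons_val_zero, Matrix.cons_val_one, Matrix.head_cons,
        Matrix.cons_val', Matrix.empty_val', Matrix.cons_val_fin_one, Matrix.head_fin_const,
        Matrix.of_apply, Real.cos_pi_div_two_sub, Real.sin_pi_div_two_sub, ← ha, ← hb]
      ring
    rw [hcol]
    set t := Real.log (r / Real.sqrt d) with ht
    rcases eq_or_lt_of_le (by positivity : (0:ℝ) ≤ a ^ 2 + b ^ 2) with h0 | h0
    · have haz : a = 0 := by nlinarith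
      have hbz : b = 0 := by nlinarith
      rw [haz, hbz]
      have : (0:ℝ) < 2 * d := by linarith
      simpa using this
    · have hrpos : 0 < r := Real.sqrt_pos.2 h0
      have hrsq : r ^ 2 = a ^ 2 + b ^ 2 := Real.sq_sqrt (le_of_lt h0)
      have hdsq : Real.sqrt d ^ 2 = d := Real.sq_sqrt hd.le
      have het : Real.exp t = r / Real.sqrt d := by
        rw [ht, Real.exp_log (by positivity)]
      have hemt : Real.exp (-t) = Real.sqrt d / r := by
        rw [Real.exp_neg, het, inv_div]
      rw [het, hemt, mul_pow, mul_pow, div_pow, div_pow, hdsq]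
      set W := (Real.sin θ * a - Real.cos θ * b) ^ 2 with hWdef
      set P := (Real.cos θ * a + Real.sin θ * b) ^ 2 with hPdef
      have hWnn : 0 ≤ W := sq_nonneg _
      have hPnn : 0 ≤ P := sq_nonneg _
      have hsc : Real.sin θ ^ 2 + Real.cos θ ^ 2 = 1 := Real.sin_sq_add_cos_sq θ
      have hpyth : W + P = r ^ 2 := by rw [hWdef, hPdef, hrsq]; nlinarith
      have h1 : r ^ 2 * W < d ^ 2 := by
        have h2 : 0 ≤ r * |Real.cos θ * b - Real.sin θ * a| := by positivity
        have habs : |Real.cos θ * b - Real.sin θ * a| ^ 2 = W := by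
          rw [sq_abs, hWdef]; ring
        have h3 := mul_self_lt_mul_self h2 happ
        calc r ^ 2 * W = (r * |Real.cos θ * b - Real.sin θ * a|) *
              (r * |Real.cos θ * b - Real.sin θ * a|) := by rw [← habs]; ring
          _ < d * d := h3
          _ = d ^ 2 := (sq d).symm
      have hP : P ≤ r ^ 2 := by linarith
      have e2 : d / r ^ 2 * P ≤ d := by
        rw [div_mul_eq_mul_div, div_le_iff₀ (pow_pos hrpos 2)]
        exact mul_le_mul_of_nonneg_left hP hd.le
      have e1' : r ^ 2 / d * W < d := by
        rw [div_mul_eq_mul_div, div_lt_iff₀ hd]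
        exact lt_of_lt_of_le h1 (le_of_eq (sq d))
      linarith
end
end

section
/- Let c > 0, let θ, φ ∈ ℝ, T > 0, and t ≥ 0, and let γ ∈ SL(2,ℝ) be a matrix whose first column is v = (T cos φ, T sin φ). Set θ' := π/2 − θ. If the first column of the matrix g_t · r_{θ'} · γ has squared Euclidean norm strictly less than 1/c, then ‖v‖ · |e_θ ∧ v| = T² · |sin(θ − φ)| < 2/c. (Converse direction of Proposition 2.2: penetration of the geodesic trajectory above height c in the upper half-plane forces the direction θ to be (2/c)-well-approximated by the vector v.) -/
open Matrix Real MeasureTheory Filter Topology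

noncomputable section

/-- converse direction of Proposition 2.2. -/
theorem stmt_2 (c θ φ T t : ℝ) (hc : 0 < c) (hT : 0 < T) (ht : 0 ≤ t)
    (γ : SL2)
    (hγ0 : (γ : Matrix (Fin 2) (Fin 2) ℝ) 0 0 = T * Real.cos φ)
    (hγ1 : (γ : Matrix (Fin 2) (Fin 2) ℝ) 1 0 = T * Real.sin φ)
    (hpen : colSq (gSL t * rSL (Real.pi / 2 - θ) * γ) < 1 / c) :
    eNorm ![T * Real.cos φ, T * Real.sin φ] *
        |wedge (eVec θ) ![T * Real.cos φ, T * Real.sin φ]| =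
      T ^ 2 * |Real.sin (θ - φ)| ∧
    T ^ 2 * |Real.sin (θ - φ)| < 2 / c := by
  have hsc := Real.sin_sq_add_cos_sq (θ - φ)
  set A := Real.exp t with hA
  set B := Real.exp (-t) with hB
  have hAB : A * B = 1 := by rw [hA, hB, ← Real.exp_add]; simp
  have hA0 : 0 < A := Real.exp_pos t
  have hB0 : 0 < B := Real.exp_pos (-t)
  have hBA : B ≤ A := Real.exp_le_exp.mpr (by linarith)
  have h00 : ((gSL t * rSL (Real.pi / 2 - θ) * γ : SL2) : Matrix (Fin 2) (Fin 2) ℝ) 0 0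
      = A * (T * Real.sin (θ - φ)) := by
    rw [Matrix.SpecialLinearGroup.coe_mul, Matrix.SpecialLinearGroup.coe_mul]
    simp [gSL, rSL, Matrix.mul_apply, Fin.sum_univ_two, hγ0, hγ1, hA,
      Real.cos_pi_div_two_sub, Real.sin_pi_div_two_sub, Real.sin_sub]
    ring
  have h10 : ((gSL t * rSL (Real.pi / 2 - θ) * γ : SL2) : Matrix (Fin 2) (Fin 2) ℝ) 1 0
      = B * (T * Real.cos (θ - φ)) := by
    rw [Matrix.SpecialLinearGroup.coe_mul, Matrix.SpecialLinearGroup.coe_mul]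
    simp [gSL, rSL, Matrix.mul_apply, Fin.sum_univ_two, hγ0, hγ1, hB,
      Real.cos_pi_div_two_sub, Real.sin_pi_div_two_sub, Real.cos_sub]
    ring
  rw [colSq, h00, h10] at hpen
  have key : T ^ 2 * |Real.sin (θ - φ)| < 2 / c := by
    set u := |Real.sin (θ - φ)| with hu
    have hu0 : 0 ≤ u := abs_nonneg _
    have hu2 : u ^ 2 = Real.sin (θ - φ) ^ 2 := sq_abs _
    have hB2A2 : B ^ 2 ≤ A ^ 2 := by nlinarith
    have h1 : (A * (T * u)) ^ 2 < 1 / c := by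
      have he : (A * (T * u)) ^ 2 = (A * (T * Real.sin (θ - φ))) ^ 2 := by
        rw [mul_pow, mul_pow, mul_pow, mul_pow, hu2]
      rw [he]
      nlinarith [sq_nonneg (B * (T * Real.cos (θ - φ)))]
    have h2 : (B * T) ^ 2 < 1 / c := by
      have he : (B * T) ^ 2 = B ^ 2 * T ^ 2 * Real.sin (θ - φ) ^ 2
          + B ^ 2 * T ^ 2 * Real.cos (θ - φ) ^ 2 := by
        linear_combination (-(B ^ 2 * T ^ 2)) * hsc
      have h3 : B ^ 2 * T ^ 2 * Real.sin (θ - φ) ^ 2 ≤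
          A ^ 2 * T ^ 2 * Real.sin (θ - φ) ^ 2 :=
        mul_le_mul_of_nonneg_right
          (mul_le_mul_of_nonneg_right hB2A2 (sq_nonneg T)) (sq_nonneg _)
      have hpen' : A ^ 2 * T ^ 2 * Real.sin (θ - φ) ^ 2
          + B ^ 2 * T ^ 2 * Real.cos (θ - φ) ^ 2 < 1 / c := by
        have e1 : (A * (T * Real.sin (θ - φ))) ^ 2
            = A ^ 2 * T ^ 2 * Real.sin (θ - φ) ^ 2 := by ring
        have e2 : (B * (T * Real.cos (θ - φ))) ^ 2
            = B ^ 2 * T ^ 2 * Real.cos (θ - φ) ^ 2 := by ring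
        linarith [hpen, e1 ▸ e2 ▸ hpen]
      linarith [he, h3, hpen']
    have hc1 : (0:ℝ) < 1 / c := by positivity
    have hprod : (A * (T * u)) ^ 2 * ((B * T) ^ 2) < (1 / c) * (1 / c) :=
      calc (A * (T * u)) ^ 2 * ((B * T) ^ 2)
          ≤ (A * (T * u)) ^ 2 * (1 / c) :=
            mul_le_mul_of_nonneg_left h2.le (sq_nonneg _)
        _ < (1 / c) * (1 / c) := mul_lt_mul_of_pos_right h1 hc1
    have heq : (A * (T * u)) ^ 2 * ((B * T) ^ 2) = (T ^ 2 * u) ^ 2 := by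
      linear_combination (T ^ 4 * u ^ 2 * (A * B + 1)) * hAB
    have hsq : (T ^ 2 * u) ^ 2 < (1 / c) * (1 / c) := by rw [← heq]; exact hprod
    have hpos : 0 ≤ T ^ 2 * u := by positivity
    have h1c : (1 / c) * (1 / c) = (1 / c) ^ 2 := (pow_two _).symm
    rw [h1c] at hsq
    have hlt : T ^ 2 * u < 1 / c := lt_of_pow_lt_pow_left₀ 2 hc1.le hsq
    have : 2 / c = 1 / c + 1 / c := by ring
    linarith
  refine ⟨?_, key⟩
  have hnorm : eNorm ![T * Real.cos φ, T * Real.sin φ] = T := by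
    simp only [eNorm, Matrix.cons_val_zero, Matrix.cons_val_one, Matrix.head_cons]
    rw [show (T * Real.cos φ) ^ 2 + (T * Real.sin φ) ^ 2 = T ^ 2 by
      nlinarith [Real.sin_sq_add_cos_sq φ]]
    exact Real.sqrt_sq hT.le
  have hwedge : |wedge (eVec θ) ![T * Real.cos φ, T * Real.sin φ]| =
      T * |Real.sin (θ - φ)| := by
    simp only [wedge, eVec, Matrix.cons_val_zero, Matrix.cons_val_one, Matrix.head_cons]
    rw [show Real.cos θ * (T * Real.sin φ) - Real.sin θ * (T * Real.cos φ)
        = -(T * Real.sin (θ - φ)) by rw [Real.sin_sub]; ring, abs_neg, abs_mul,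
      abs_of_pos hT]
  rw [hnorm, hwedge]; ring
end
end

section
/- Let Γ ⊆ SL(2,ℝ) be a countably infinite subgroup, let x ∈ ℝ² \ {0}, and let d > 0. Assume that the set of angles {θ ∈ ℝ : e_θ = γx/‖γx‖ for some γ ∈ Γ} is dense in ℝ. Then the set of θ ∈ ℝ that are d-well-approximable by Γx is a dense G_δ subset of ℝ. (This is the content of Proposition 4.1: since the directions of orbit vectors are themselves trivially well-approximated — the wedge product vanishes there — each of the open sets G_n is dense, and the Baire category theorem applies.) -/
open Matrix Real MeasureTheory Filter Topology

noncomputable section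

lemma myDenseInterInf {D : Set ℝ} (hD : Dense D) {a b : ℝ} (hab : a < b) :
    (D ∩ Set.Ioo a b).Infinite := by
  by_contra h
  rw [Set.not_infinite] at h
  have hIoo : (Set.Ioo a b).Infinite :=
    Set.infinite_coe_iff.mp (Set.Ioo.infinite hab (α := ℝ))
  have hne : (Set.Ioo a b \ (D ∩ Set.Ioo a b)).Nonempty :=
    Set.diff_nonempty.mpr fun hsub => hIoo (h.subset hsub)
  have hopen : IsOpen (Set.Ioo a b \ (D ∩ Set.Ioo a b)) :=
    isOpen_Ioo.sdiff h.isClosed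
  obtain ⟨θ, hθD, hθ⟩ := hD.exists_mem_open hopen hne
  exact hθ.2 ⟨hθD, hθ.1⟩

lemma myEVecInj {a b θ₁ θ₂ : ℝ} (h1 : θ₁ ∈ Set.Ioo a b) (h2 : θ₂ ∈ Set.Ioo a b)
    (hlen : b - a ≤ 2) (hc : Real.cos θ₁ = Real.cos θ₂) (hs : Real.sin θ₁ = Real.sin θ₂) :
    θ₁ = θ₂ := by
  have hcos : Real.cos (θ₁ - θ₂) = 1 := by
    rw [Real.cos_sub, hc, hs]
    nlinarith [Real.sin_sq_add_cos_sq θ₂]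
  have hpi : (2:ℝ) < 2 * Real.pi := by nlinarith [Real.pi_gt_three]
  have h1' : -(2 * Real.pi) < θ₁ - θ₂ := by
    have := h1.1; have := h2.2; linarith
  have h2' : θ₁ - θ₂ < 2 * Real.pi := by
    have := h1.2; have := h2.1; linarith
  have := (Real.cos_eq_one_iff_of_lt_of_lt h1' h2').mp hcos
  linarith

/-- Proposition 4.1, the well-approximable set is a dense Gδ. -/
theorem stmt_7 (Γ : Subgroup SL2) (hcount : Countable Γ) (hinf : Infinite Γ)
    (x : Fin 2 → ℝ) (hx : x ≠ 0) (d : ℝ) (hd : 0 < d)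
    (hdense : Dense {θ : ℝ | ∃ γ : Γ, ∀ i, eVec θ i =
      (((γ : SL2) : Matrix (Fin 2) (Fin 2) ℝ).mulVec x) i /
        eNorm (((γ : SL2) : Matrix (Fin 2) (Fin 2) ℝ).mulVec x)}) :
    IsGδ {θ : ℝ | WellApprox Γ x d θ} ∧ Dense {θ : ℝ | WellApprox Γ x d θ} := by
  classical
  obtain ⟨den⟩ := nonempty_denumerable Γ
  let e : Γ ≃ ℕ := @Denumerable.eqv Γ den
  set v : Γ → Fin 2 → ℝ :=
    fun γ => (((γ : SL2) : Matrix (Fin 2) (Fin 2) ℝ).mulVec x) with hv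
  set f : Γ → ℝ → ℝ := fun γ θ => eNorm (v γ) * |wedge (eVec θ) (v γ)| with hf
  set G : ℕ → Set ℝ := fun n => ⋃ γ : Γ, ⋃ _ : n ≤ e γ, {θ | f γ θ < d} with hG
  have hGopen : ∀ n, IsOpen (G n) := by
    intro n
    refine isOpen_iUnion fun γ => isOpen_iUnion fun _ => ?_
    have hcont : Continuous fun θ => f γ θ := by
      have : (fun θ => f γ θ) =
          fun θ => eNorm (v γ) * |Real.cos θ * v γ 1 - Real.sin θ * v γ 0| := by
        funext θ; simp [hf, wedge, eVec]
      rw [this]; fun_prop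
    exact isOpen_lt hcont continuous_const
  -- characterize the set as an intersection
  have hSeq : {θ : ℝ | WellApprox Γ x d θ} = ⋂ n, G n := by
    ext θ
    simp only [Set.mem_setOf_eq, Set.mem_iInter, hG, Set.mem_iUnion]
    constructor
    · intro hinf' n
      have himg : (e '' {γ : Γ | f γ θ < d}).Infinite :=
        hinf'.image (e.injective.injOn)
      obtain ⟨m, hm, hnm⟩ := himg.exists_gt n
      obtain ⟨γ, hγ, rfl⟩ := hm
      exact ⟨γ, le_of_lt hnm, hγ⟩
    · intro h
      by_contra hfin
      have hfin2 : ({γ : Γ | f γ θ < d}).Finite := Set.not_infinite.mp hfin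
      have : BddAbove (e '' {γ : Γ | f γ θ < d}) := (hfin2.image e).bddAbove
      obtain ⟨N, hN⟩ := this
      obtain ⟨γ, hn, hγ⟩ := h (N + 1)
      have : e γ ≤ N := hN ⟨γ, hγ, rfl⟩
      omega
  have hGdense : ∀ n, Dense (G n) := by
    intro n
    rw [dense_iff_inter_open]
    intro U hU ⟨c, hc⟩
    obtain ⟨r, hr, hball⟩ := Metric.isOpen_iff.mp hU c hc
    set r' : ℝ := min r 1 with hr'
    have hr'0 : 0 < r' := lt_min hr one_pos
    set a := c - r' with ha
    set b := c + r' with hb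
    have hab : a < b := by simp [ha, hb]; linarith
    have hsub : Set.Ioo a b ⊆ U := by
      intro θ hθ
      apply hball
      rw [Metric.mem_ball, Real.dist_eq, abs_lt]
      constructor
      · have := hθ.1; have : r' ≤ r := min_le_left _ _; simp only [ha] at *; linarith [hθ.1]
      · have : r' ≤ r := min_le_left _ _; simp only [hb] at *; linarith [hθ.2]
    -- the set of group elements realizing a direction in (a,b) is infinite
    set Γ' : Set Γ := {γ : Γ | ∃ θ ∈ Set.Ioo a b, ∀ i, eVec θ i = v γ i / eNorm (v γ)}
      with hΓ'
    have hΓ'inf : Γ'.Infinite := by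
      by_contra hfin
      rw [Set.not_infinite] at hfin
      have hW : ((fun γ => fun i => v γ i / eNorm (v γ)) '' Γ').Finite := hfin.image _
      set D : Set ℝ := {θ : ℝ | ∃ γ : Γ, ∀ i, eVec θ i = v γ i / eNorm (v γ)} with hD
      have hDinf : (D ∩ Set.Ioo a b).Infinite := myDenseInterInf hdense hab
      have hlen : b - a ≤ 2 := by
        simp only [ha, hb]
        have : r' ≤ 1 := min_le_right _ _
        linarith
      have hinj : Set.InjOn eVec (D ∩ Set.Ioo a b) := by
        intro θ₁ h1 θ₂ h2 heq
        have hc' : Real.cos θ₁ = Real.cos θ₂ := by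
          have := congrFun heq 0; simpa [eVec] using this
        have hs' : Real.sin θ₁ = Real.sin θ₂ := by
          have := congrFun heq 1; simpa [eVec] using this
        exact myEVecInj h1.2 h2.2 hlen hc' hs'
      have himg : (eVec '' (D ∩ Set.Ioo a b)).Infinite := hDinf.image hinj
      apply himg
      apply hW.subset
      rintro _ ⟨θ, ⟨⟨γ, hγ⟩, hθI⟩, rfl⟩
      exact ⟨γ, ⟨θ, hθI, hγ⟩, by funext i; exact (hγ i).symm⟩
    -- extract an element of large index
    have himg : (e '' Γ').Infinite := hΓ'inf.image (e.injective.injOn)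
    obtain ⟨m, hm, hnm⟩ := himg.exists_gt n
    obtain ⟨γ, hγ, rfl⟩ := hm
    obtain ⟨θ, hθI, hθ⟩ := hγ
    refine ⟨θ, hsub hθI, ?_⟩
    simp only [hG, Set.mem_iUnion]
    refine ⟨γ, le_of_lt hnm, ?_⟩
    have hw : wedge (eVec θ) (v γ) = 0 := by
      have h0 := hθ 0
      have h1 := hθ 1
      simp only [eVec, Matrix.cons_val_zero, Matrix.cons_val_one, Matrix.head_cons] at h0 h1
      simp only [wedge, eVec, Matrix.cons_val_zero, Matrix.cons_val_one, Matrix.head_cons,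
        h0, h1]
      ring
    show f γ θ < d
    rw [hf]
    simp only [hw, abs_zero, mul_zero]
    exact hd
  rw [hSeq]
  exact ⟨IsGδ.iInter fun n => (hGopen n).isGδ, dense_iInter_of_isOpen hGopen hGdense⟩
end
end

section
/- Let Γ ⊆ SL(2,ℝ) be a subgroup, let 0 < c < c', let s ∈ ℝ, and let g ∈ SL(2,ℝ). Suppose there exist a sequence tₙ → ∞ and elements γₙ ∈ Γ such that for every n the first column of the matrix g_{tₙ} · h_s⁻ · g · γₙ has squared Euclidean norm strictly less than 1/c'. Then there exist a sequence t'ₙ → ∞ and elements γ'ₙ ∈ Γ such that for every n the first column of g_{t'ₙ} · g · γ'ₙ has squared Euclidean norm strictly less than 1/c. (Claim in the proof of Proposition 2.3: since g_t h_s⁻ g_{−t} → Id as t → ∞, cusp penetration at height c' by the point h_s⁻·[g] forces cusp penetration at height c by the point [g].) -/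
open Matrix Real MeasureTheory Filter Topology

noncomputable section

lemma colSq_gSL_hSL (t s : ℝ) (h : SL2) :
    colSq (gSL t * hSL s * h) =
      (Real.exp t * (h : Matrix (Fin 2) (Fin 2) ℝ) 0 0)^2 +
      (s * Real.exp (-2*t) * (Real.exp t * (h : Matrix (Fin 2) (Fin 2) ℝ) 0 0) +
        Real.exp (-t) * (h : Matrix (Fin 2) (Fin 2) ℝ) 1 0)^2 := by
  have he : Real.exp (-2*t) * Real.exp t = Real.exp (-t) := by
    rw [← Real.exp_add]; ring_nf
  simp only [colSq, Matrix.SpecialLinearGroup.coe_mul]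
  simp [colSq, gSL, hSL, Matrix.mul_apply, Fin.sum_univ_two]
  rw [← he, neg_mul]; ring

lemma colSq_gSL (t : ℝ) (h : SL2) :
    colSq (gSL t * h) =
      (Real.exp t * (h : Matrix (Fin 2) (Fin 2) ℝ) 0 0)^2 +
      (Real.exp (-t) * (h : Matrix (Fin 2) (Fin 2) ℝ) 1 0)^2 := by
  simp only [colSq, Matrix.SpecialLinearGroup.coe_mul]
  simp [colSq, gSL, Matrix.mul_apply, Fin.sum_univ_two]

lemma key_ineq (a b ε δ : ℝ) (hδ : 0 < δ) (hε : |ε| ≤ δ) :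
    a^2 + b^2 ≤ (1+δ)^2 * (a^2 + (ε*a + b)^2) := by
  have h1 : ε^2 ≤ δ^2 := by nlinarith [sq_abs ε, abs_nonneg ε]
  have h2 : -(2*ε*a*(ε*a+b)) ≤ δ*(a^2 + (ε*a+b)^2) := by
    have h3 : |2*ε*a*(ε*a+b)| ≤ δ*(a^2 + (ε*a+b)^2) := by
      rw [show 2*ε*a*(ε*a+b) = ε*(2*a*(ε*a+b)) by ring, abs_mul, abs_mul, abs_mul]
      have h5 : |(2:ℝ)| * |a| * |ε*a+b| ≤ a^2 + (ε*a+b)^2 := by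
        rw [abs_two]
        nlinarith [sq_nonneg (|a| - |ε*a+b|), sq_abs a, sq_abs (ε*a+b),
          abs_nonneg a, abs_nonneg (ε*a+b)]
      have hnn : (0:ℝ) ≤ |(2:ℝ)| * |a| * |ε*a+b| := by positivity
      calc |ε| * (|2| * |a| * |ε*a+b|) ≤ δ * (|2| * |a| * |ε*a+b|) :=
            mul_le_mul_of_nonneg_right hε hnn
        _ ≤ δ * (a^2 + (ε*a+b)^2) := mul_le_mul_of_nonneg_left h5 hδ.le
    calc -(2*ε*a*(ε*a+b)) ≤ |2*ε*a*(ε*a+b)| := neg_le_abs _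
      _ ≤ _ := h3
  nlinarith [sq_nonneg a, sq_nonneg (ε*a+b)]

/-- cusp penetration by `h_s⁻·[g]` forces cusp penetration by `[g]`
(claim in the proof of Proposition 2.3). -/
theorem stmt_9 (Γ : Subgroup SL2) (c c' : ℝ) (hc : 0 < c) (hcc' : c < c')
    (s : ℝ) (g : SL2)
    (t : ℕ → ℝ) (ht : Filter.Tendsto t Filter.atTop Filter.atTop)
    (γ : ℕ → Γ) (hpen : ∀ n, colSq (gSL (t n) * hSL s * g * (γ n : SL2)) < 1 / c') :
    ∃ t' : ℕ → ℝ, Filter.Tendsto t' Filter.atTop Filter.atTop ∧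
      ∃ γ' : ℕ → Γ, ∀ n, colSq (gSL (t' n) * g * (γ' n : SL2)) < 1 / c := by
  have hc' : 0 < c' := hc.trans hcc'
  set δ : ℝ := Real.sqrt (c'/c) - 1 with hδdef
  have hsq : Real.sqrt (c'/c) ^ 2 = c'/c := Real.sq_sqrt (by positivity)
  have h1cc : (1:ℝ) < c'/c := (one_lt_div hc).mpr hcc'
  have hδ : 0 < δ := by
    have h1 : (1:ℝ) < Real.sqrt (c'/c) := by
      nlinarith [Real.sqrt_nonneg (c'/c)]
    simp only [hδdef]; linarith
  have hδsq : (1+δ)^2 * c = c' := by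
    have h1 : (1+δ) = Real.sqrt (c'/c) := by simp [hδdef]
    rw [h1, hsq]; field_simp
  have htend : Filter.Tendsto (fun n => |s| * Real.exp (-2 * t n)) Filter.atTop (nhds 0) := by
    have h1 : Filter.Tendsto (fun n => -2 * t n) Filter.atTop Filter.atBot :=
      Filter.Tendsto.const_mul_atTop_of_neg (by norm_num : (-2:ℝ) < 0) ht
    have h2 := Real.tendsto_exp_atBot.comp h1
    have h3 := h2.const_mul |s|
    simpa using h3
  have hev : ∀ᶠ n in Filter.atTop, |s| * Real.exp (-2 * t n) ≤ δ :=
    (htend.eventually (gt_mem_nhds hδ)).mono fun n hn => le_of_lt hn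
  obtain ⟨N, hN⟩ := Filter.eventually_atTop.mp hev
  refine ⟨fun n => t (n + N), ht.comp (Filter.tendsto_add_atTop_nat N),
    fun n => γ (n + N), fun n => ?_⟩
  set m := n + N with hm
  show colSq (gSL (t m) * g * (γ m : SL2)) < 1 / c
  have hsm : |s| * Real.exp (-2 * t m) ≤ δ := hN m (Nat.le_add_left N n)
  have hM := hpen m
  rw [mul_assoc] at hM
  rw [colSq_gSL_hSL] at hM
  rw [mul_assoc, colSq_gSL]
  set a := Real.exp (t m) * ((g * (γ m : SL2) : SL2) : Matrix (Fin 2) (Fin 2) ℝ) 0 0 with ha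
  set b := Real.exp (-(t m)) * ((g * (γ m : SL2) : SL2) : Matrix (Fin 2) (Fin 2) ℝ) 1 0 with hb
  set ε : ℝ := s * Real.exp (-2 * t m) with hε
  have habs : |ε| ≤ δ := by
    rw [hε, abs_mul, abs_of_pos (Real.exp_pos _)]; exact hsm
  have hM' : a^2 + (ε*a + b)^2 < 1/c' := by
    have heq : ε*a + b = s * Real.exp (-2 * t m) * a + b := by rw [hε]
    rw [heq]; exact hM
  have hkey := key_ineq a b ε δ hδ habs
  have hpos : (0:ℝ) < (1+δ)^2 := by positivity
  have hlt : a^2 + b^2 < (1+δ)^2 * (1/c') :=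
    lt_of_le_of_lt hkey (by nlinarith)
  have hfin : (1+δ)^2 * (1/c') = 1/c := by
    rw [← hδsq]
    have h1δ : (1+δ) ≠ 0 := by positivity
    field_simp
  rw [← hfin]
  exact hlt
end
end

section
/- Let X be a topological space, let (φ_t)_{t∈ℝ} be a flow on X (i.e. φ_0 = id and φ_{t+s} = φ_t ∘ φ_s for all t, s ∈ ℝ), and let α : X × ℝ → ℤ satisfy the cocycle identity α(x, t+s) = α(x, t) + α(φ_t x, s). Assume there is a constant K ≥ 0 such that for every T ∈ ℝ and every x ∈ X there is a neighborhood U of x with |α(x, T) − α(y, T)| ≤ K for all y ∈ U. Suppose x₁ ∈ X is a point such that for every s ∈ ℝ the forward orbit {φ_t x₁ : t > s} is dense in X, and such that |α(x₁, t)| ≤ N for all t > 0. Then for every x₂ ∈ X and every T ∈ ℝ one has |α(x₂, T)| ≤ 2N + K; in particular {α(x₂, t) : t > 0} is not all of ℤ. (This is the abstract core of the proof of Proposition 5.1, the Kesten-type theorem that recurrent ℤ-covers with an ergodic direction admit no bounded trajectories.) -/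
open Topology

/-- abstract core of the proof of Proposition 5.1 (Kesten-type theorem). -/
theorem stmt_13 {X : Type*} [TopologicalSpace X] (φ : ℝ → X → X)
    (hφ0 : φ 0 = id) (hφadd : ∀ t s : ℝ, φ (t + s) = φ t ∘ φ s)
    (α : X → ℝ → ℤ)
    (hcoc : ∀ (x : X) (t s : ℝ), α x (t + s) = α x t + α (φ t x) s)
    (K : ℝ) (hK : 0 ≤ K)
    (hcont : ∀ (T : ℝ) (x : X), ∃ U ∈ 𝓝 x, ∀ y ∈ U, (|α x T - α y T| : ℝ) ≤ K)
    (x₁ : X) (N : ℝ)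
    (hdense : ∀ s : ℝ, Dense {y : X | ∃ t > s, φ t x₁ = y})
    (hbdd : ∀ t > (0 : ℝ), (|α x₁ t| : ℝ) ≤ N) :
    (∀ (x₂ : X) (T : ℝ), (|α x₂ T| : ℝ) ≤ 2 * N + K) ∧
    ∀ x₂ : X, {n : ℤ | ∃ t > (0 : ℝ), α x₂ t = n} ≠ Set.univ := by
  have main : ∀ (x₂ : X) (T : ℝ), (|α x₂ T| : ℝ) ≤ 2 * N + K := by
    intro x₂ T
    obtain ⟨U, hU, hUK⟩ := hcont T x₂
    -- find a point of the orbit in U, with time t > max 0 (-T)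
    have hne : (interior U).Nonempty := ⟨x₂, mem_interior_iff_mem_nhds.mpr hU⟩
    obtain ⟨y, ⟨t, ht, hty⟩, hyU⟩ :=
      (hdense (max 0 (-T))).exists_mem_open isOpen_interior hne
    have ht0 : (0 : ℝ) < t := lt_of_le_of_lt (le_max_left _ _) ht
    have htT : (0 : ℝ) < t + T := by
      have := lt_of_le_of_lt (le_max_right _ _) ht; linarith
    have hyα : (|α y T| : ℝ) ≤ 2 * N := by
      have hc := hcoc x₁ t T
      rw [hty] at hc
      have : α y T = α x₁ (t + T) - α x₁ t := by omega
      rw [this]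
      push_cast
      calc (|(α x₁ (t + T) : ℝ) - (α x₁ t : ℝ)|) ≤ |(α x₁ (t + T) : ℝ)| + |(α x₁ t : ℝ)| :=
            abs_sub _ _
        _ ≤ N + N := by
            have h1 := hbdd (t + T) htT
            have h2 := hbdd t ht0
            push_cast at h1 h2
            exact add_le_add h1 h2
        _ = 2 * N := by ring
    have hdiff : (|α x₂ T - α y T| : ℝ) ≤ K := hUK y (interior_subset hyU)
    have key : (|α x₂ T| : ℝ) = |((α x₂ T : ℝ) - (α y T : ℝ)) + (α y T : ℝ)| := by
      push_cast; ring_nf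
    rw [key]
    calc |((α x₂ T : ℝ) - (α y T : ℝ)) + (α y T : ℝ)|
        ≤ |(α x₂ T : ℝ) - (α y T : ℝ)| + |(α y T : ℝ)| := abs_add_le _ _
      _ ≤ K + 2 * N := add_le_add hdiff hyα
      _ = 2 * N + K := by ring
  refine ⟨main, fun x₂ h => ?_⟩
  set n : ℤ := ⌈2 * N + K⌉ + 1 with hn
  have hmem : n ∈ {n : ℤ | ∃ t > (0 : ℝ), α x₂ t = n} := h ▸ Set.mem_univ n
  obtain ⟨t, ht, hαt⟩ := hmem
  have h1 := main x₂ t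
  rw [hαt] at h1
  have h2 : (2 * N + K : ℝ) < n := by
    have := Int.le_ceil (2 * N + K)
    have : ((⌈2 * N + K⌉ : ℤ) : ℝ) < n := by exact_mod_cast lt_add_one _
    linarith [Int.le_ceil (2 * N + K)]
  have h3 : (n : ℝ) ≤ |(n : ℝ)| := le_abs_self _
  push_cast at h1
  linarith
end
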